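/- arXiv:math/0504246 — 3 statements merged into one kernel-verified Lean document; each statement's English description precedes it below -/
import Mathlib

section
/- Let f : {0,1}^k → {0,1} and 1 ≤ t ≤ k. Then f is t-null if and only if f̂(S) = 0 for all nonempty S ⊆ {1,...,k} with |S| ≤ t. -/
open Finset

/-- Conditional probability `Pr[f(x) = 1 | x_S = σ]` under the uniform
distribution on `{0,1}^k`. -/
noncomputable def pCond (k : ℕ) (f : (Fin k → Bool) → Bool)
    (S : Finset (Fin k)) (σ : Fin k → Bool) : ℝ :=
  ((univ.filter fun x : Fin k → Bool => f x = true ∧ ∀ i ∈ S, x i = σ i).card : ℝ) /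
    ((univ.filter fun x : Fin k → Bool => ∀ i ∈ S, x i = σ i).card : ℝ)

/-- `f` is `t`-null: all conditional probabilities over sets of size `t` agree. -/
def IsTNull (k : ℕ) (f : (Fin k → Bool) → Bool) (t : ℕ) : Prop :=
  ∀ S S' : Finset (Fin k), S.card = t → S'.card = t →
    ∀ σ σ' : Fin k → Bool, pCond k f S σ = pCond k f S' σ'

/-- Fourier coefficient of a boolean function. -/
noncomputable def boolFourierCoeff (k : ℕ) (f : (Fin k → Bool) → Bool)
    (S : Finset (Fin k)) : ℝ :=
  (1 / 2 ^ k : ℝ) *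
    ∑ x : Fin k → Bool,
      (if f x then (1 : ℝ) else 0) * (-1 : ℝ) ^ (∑ i ∈ S, if x i then 1 else 0)

/-! Writing `χ_T(x) = ∏_{i ∈ T} (-1)^{x_i}`, the indicator of `x_S = σ_S` equals
`2^{-|S|} ∑_{T ⊆ S} χ_T(x) χ_T(σ)`, so that `pCond f S σ = ∑_{T ⊆ S} f̂(T) χ_T(σ)`.
If `f̂` vanishes on the nonempty sets of size at most `t`, this is `f̂(∅)` whenever `|S| = t`.
Conversely, given a nonempty `T` with `|T| ≤ t`, extend it to some `S` with `|S| = t`: `t`-nullity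
makes `σ ↦ pCond f S σ` constant, and pairing it with `χ_T` by orthogonality of characters
gives `2^k f̂(T) = 0`. -/

open scoped symmDiff

section BoolChar

variable {k : ℕ}

noncomputable def boolChar (T : Finset (Fin k)) (x : Fin k → Bool) : ℝ :=
  ∏ i ∈ T, if x i then -1 else 1

lemma neg_one_pow_sum_eq_boolChar (T : Finset (Fin k)) (x : Fin k → Bool) :
    (-1 : ℝ) ^ (∑ i ∈ T, if x i then 1 else 0) = boolChar T x := by
  rw [← prod_pow_eq_pow_sum, boolChar]
  refine prod_congr rfl fun i _ => ?_
  cases x i <;> simp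

@[simp]
lemma boolChar_empty (x : Fin k → Bool) : boolChar ∅ x = 1 := prod_empty

lemma boolChar_eq_prod_univ (T : Finset (Fin k)) (x : Fin k → Bool) :
    boolChar T x = ∏ i, if i ∈ T then (if x i then -1 else 1) else 1 := by
  rw [boolChar, Fintype.prod_ite_mem]

lemma boolChar_mul_boolChar (T T' : Finset (Fin k)) (x : Fin k → Bool) :
    boolChar T x * boolChar T' x = boolChar (T ∆ T') x := by
  simp only [boolChar_eq_prod_univ, ← prod_mul_distrib]
  refine prod_congr rfl fun i _ => ?_
  by_cases hT : i ∈ T <;> by_cases hT' : i ∈ T' <;> cases x i <;> simp [hT, hT', mem_symmDiff]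

lemma sum_boolChar (T : Finset (Fin k)) :
    ∑ x, boolChar T x = if T = ∅ then 2 ^ k else 0 := by
  have hfactor (i : Fin k) :
      ∑ b : Bool, (if i ∈ T then (if b then (-1 : ℝ) else 1) else 1) = if i ∈ T then 0 else 2 := by
    by_cases hi : i ∈ T <;> simp [hi]
  simp only [boolChar_eq_prod_univ]
  rw [← Fintype.prod_sum fun i (b : Bool) => if i ∈ T then (if b then (-1 : ℝ) else 1) else 1,
    prod_congr rfl fun i _ => hfactor i]
  split_ifs with hT
  · simp [hT]
  · obtain ⟨i, hi⟩ := nonempty_iff_ne_empty.mpr hT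
    exact prod_eq_zero (mem_univ i) (if_pos hi)

lemma sum_boolChar_mul_boolChar (T T' : Finset (Fin k)) :
    ∑ x, boolChar T x * boolChar T' x = if T = T' then 2 ^ k else 0 := by
  simp only [boolChar_mul_boolChar, sum_boolChar, ← bot_eq_empty, symmDiff_eq_bot]

lemma indicator_agree_mul_two_pow_card (S : Finset (Fin k)) (x σ : Fin k → Bool) :
    (if ∀ i ∈ S, x i = σ i then (1 : ℝ) else 0) * 2 ^ #S =
      ∑ T ∈ S.powerset, boolChar T x * boolChar T σ := by
  have hfactor : ∀ i ∈ S, 1 + (if x i then (-1 : ℝ) else 1) * (if σ i then -1 else 1) =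
      2 * if x i = σ i then 1 else 0 := by
    intro i _
    cases x i <;> cases σ i <;> norm_num
  simp only [boolChar, ← prod_mul_distrib]
  rw [← prod_one_add, prod_congr rfl hfactor, prod_mul_distrib, prod_const, prod_boole, mul_comm]
  -- `prod_boole` produces a different `Decidable` instance for `∀ i ∈ S, x i = σ i`
  congr

lemma sum_mul_indicator_agree_mul_two_pow_card (g : (Fin k → Bool) → ℝ) (S : Finset (Fin k))
    (σ : Fin k → Bool) :
    (∑ x, g x * if ∀ i ∈ S, x i = σ i then 1 else 0) * 2 ^ #S =
      ∑ T ∈ S.powerset, boolChar T σ * ∑ x, g x * boolChar T x := by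
  simp only [sum_mul, mul_assoc, indicator_agree_mul_two_pow_card, mul_sum]
  rw [sum_comm]
  exact sum_congr rfl fun T _ => sum_congr rfl fun x _ => by ring

lemma boolFourierCoeff_eq (f : (Fin k → Bool) → Bool) (T : Finset (Fin k)) :
    boolFourierCoeff k f T = (2 ^ k)⁻¹ * ∑ x, (if f x then 1 else 0) * boolChar T x := by
  simp only [boolFourierCoeff, one_div, neg_one_pow_sum_eq_boolChar]

lemma pCond_eq_sum_boolFourierCoeff (f : (Fin k → Bool) → Bool) (S : Finset (Fin k))
    (σ : Fin k → Bool) :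
    pCond k f S σ = ∑ T ∈ S.powerset, boolFourierCoeff k f T * boolChar T σ := by
  have hnum : ((univ.filter fun x : Fin k → Bool => f x = true ∧ ∀ i ∈ S, x i = σ i).card : ℝ) *
      2 ^ #S = 2 ^ k * ∑ T ∈ S.powerset, boolFourierCoeff k f T * boolChar T σ := by
    have hsplit : ((univ.filter fun x : Fin k → Bool => f x = true ∧ ∀ i ∈ S, x i = σ i).card : ℝ)
        = ∑ x, (if f x then 1 else 0) * if ∀ i ∈ S, x i = σ i then 1 else 0 := by
      simp only [natCast_card_filter, ite_zero_mul_ite_zero, mul_one]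
    rw [hsplit, sum_mul_indicator_agree_mul_two_pow_card, mul_sum]
    refine sum_congr rfl fun T _ => ?_
    rw [boolFourierCoeff_eq]
    field_simp
  have hden : ((univ.filter fun x : Fin k → Bool => ∀ i ∈ S, x i = σ i).card : ℝ) * 2 ^ #S =
      2 ^ k := by
    have hsplit : ((univ.filter fun x : Fin k → Bool => ∀ i ∈ S, x i = σ i).card : ℝ)
        = ∑ x : Fin k → Bool, 1 * if ∀ i ∈ S, x i = σ i then 1 else 0 := by
      simp only [natCast_card_filter, one_mul]
    rw [hsplit, sum_mul_indicator_agree_mul_two_pow_card]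
    simp only [one_mul, sum_boolChar, mul_ite, mul_zero, sum_ite_eq', empty_mem_powerset,
      if_true, boolChar_empty]
  rw [pCond, ← mul_div_mul_right _ _ (pow_ne_zero #S two_ne_zero), hnum, hden,
    mul_div_cancel_left₀ _ (pow_ne_zero k two_ne_zero)]

lemma sum_boolChar_mul_sum_mul_boolChar (F : Finset (Finset (Fin k))) (a : Finset (Fin k) → ℝ)
    {T₀ : Finset (Fin k)} (hT₀ : T₀ ∈ F) :
    ∑ σ, boolChar T₀ σ * ∑ T ∈ F, a T * boolChar T σ = 2 ^ k * a T₀ := by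
  have hterm (T : Finset (Fin k)) :
      ∑ σ, boolChar T₀ σ * (a T * boolChar T σ) = if T₀ = T then 2 ^ k * a T else 0 := by
    rw [sum_congr rfl fun σ _ => mul_left_comm _ _ _, ← mul_sum, sum_boolChar_mul_boolChar]
    split_ifs <;> ring
  simp only [mul_sum]
  rw [sum_comm, sum_congr rfl fun T _ => hterm T, sum_ite_eq, if_pos hT₀]

lemma boolFourierCoeff_eq_zero_of_pCond_const {f : (Fin k → Bool) → Bool} {S T : Finset (Fin k)}
    (hconst : ∀ σ σ' : Fin k → Bool, pCond k f S σ = pCond k f S σ') (hTS : T ⊆ S)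
    (hT : T ≠ ∅) : boolFourierCoeff k f T = 0 := by
  have hextract := sum_boolChar_mul_sum_mul_boolChar S.powerset (boolFourierCoeff k f)
    (mem_powerset.2 hTS)
  simp only [← pCond_eq_sum_boolFourierCoeff] at hextract
  rw [sum_congr rfl fun σ _ => by rw [hconst σ fun _ => false], ← sum_mul, sum_boolChar,
    if_neg hT, zero_mul, eq_comm] at hextract
  exact (mul_eq_zero.1 hextract).resolve_left (pow_ne_zero k two_ne_zero)

lemma pCond_eq_boolFourierCoeff_empty {f : (Fin k → Bool) → Bool} {S : Finset (Fin k)}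
    (hvanish : ∀ T ⊆ S, T ≠ ∅ → boolFourierCoeff k f T = 0) (σ : Fin k → Bool) :
    pCond k f S σ = boolFourierCoeff k f ∅ := by
  rw [pCond_eq_sum_boolFourierCoeff, sum_eq_single_of_mem ∅ (empty_mem_powerset S), boolChar_empty,
    mul_one]
  intro T hT hTne
  rw [hvanish T (mem_powerset.1 hT) hTne, zero_mul]

end BoolChar

theorem tNull_iff_fourier_vanish_general (k t : ℕ) (f : (Fin k → Bool) → Bool)
    (htk : t ≤ k) :
    IsTNull k f t ↔
      ∀ S : Finset (Fin k), S ≠ ∅ → S.card ≤ t → boolFourierCoeff k f S = 0 := by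
  constructor
  · intro hnull T hT hTt
    obtain ⟨S, hTS, hS⟩ := exists_superset_card_eq hTt (by rwa [Fintype.card_fin])
    exact boolFourierCoeff_eq_zero_of_pCond_const (hnull S S hS hS) hTS hT
  · intro hvanish S S' hS hS' σ σ'
    have hvanish_of_card_eq {U : Finset (Fin k)} (hU : #U = t) :
        ∀ T ⊆ U, T ≠ ∅ → boolFourierCoeff k f T = 0 := fun T hTU hT =>
      hvanish T hT (hU ▸ card_le_card hTU)
    rw [pCond_eq_boolFourierCoeff_empty (hvanish_of_card_eq hS),
      pCond_eq_boolFourierCoeff_empty (hvanish_of_card_eq hS')]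

theorem tNull_iff_fourier_vanish (k t : ℕ) (f : (Fin k → Bool) → Bool)
    (ht1 : 1 ≤ t) (htk : t ≤ k) :
    IsTNull k f t ↔
      ∀ S : Finset (Fin k), S ≠ ∅ → S.card ≤ t → boolFourierCoeff k f S = 0 :=
  tNull_iff_fourier_vanish_general k t f htk
end

section
/- Suppose a sequence (P(j))_{j∈ℤ} of integers satisfies P(ν) − m·P(ν+r) + C(m,2)·P(ν+2r) − ... + (−1)^m·P(ν+mr) ≡ 0 (mod r) for some ν, with each |P(ν+lr)| ≤ 1 for 0 ≤ l ≤ m, and 2^m < r. If P(ν+lr) = 1 for all even l with 0 ≤ l ≤ m, then P(ν+lr) = 1 for all odd l with 0 ≤ l ≤ m as well. -/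
/-!
Since `|P| ≤ 1`, the alternating binomial sum has absolute value at most `2 ^ m < r`, so the
congruence forces it to vanish. Subtracting the vanishing sum `∑ (-1)^l C(m,l)` turns it into
`∑ (-1)^l C(m,l) (P(ν+lr) - 1)`, whose even terms are zero and whose odd terms are
`C(m,l) (1 - P(ν+lr)) ≥ 0`; a vanishing sum of nonnegative terms has all terms zero.
-/

open Finset

theorem abs_alternating_choose_sum_le {m : ℕ} {f : ℕ → ℤ} (hf : ∀ l ≤ m, |f l| ≤ 1) :
    |∑ l ∈ range (m + 1), (-1 : ℤ) ^ l * (m.choose l : ℤ) * f l| ≤ 2 ^ m := by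
  calc |∑ l ∈ range (m + 1), (-1 : ℤ) ^ l * (m.choose l : ℤ) * f l|
      ≤ ∑ l ∈ range (m + 1), |(-1 : ℤ) ^ l * (m.choose l : ℤ) * f l| := abs_sum_le_sum_abs _ _
    _ ≤ ∑ l ∈ range (m + 1), (m.choose l : ℤ) := by
        refine sum_le_sum fun l hl => ?_
        rw [abs_mul, abs_mul, abs_pow, abs_neg, abs_one, one_pow, one_mul, Nat.abs_cast]
        exact mul_le_of_le_one_right (by positivity) (hf l (Nat.lt_succ_iff.mp (mem_range.mp hl)))
    _ = 2 ^ m := by exact_mod_cast Nat.sum_range_choose m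

theorem eq_one_of_alternating_choose_sum_eq_zero {m : ℕ} (hm : m ≠ 0) {f : ℕ → ℤ}
    (hle : ∀ l ≤ m, f l ≤ 1) (heven : ∀ l ≤ m, Even l → f l = 1)
    (hsum : ∑ l ∈ range (m + 1), (-1 : ℤ) ^ l * (m.choose l : ℤ) * f l = 0) :
    ∀ l ≤ m, f l = 1 := by
  have hsum_sub : ∑ l ∈ range (m + 1), (-1 : ℤ) ^ l * (m.choose l : ℤ) * (f l - 1) = 0 := by
    simp only [mul_sub, mul_one, sum_sub_distrib, hsum, Int.alternating_sum_range_choose,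
      if_neg hm, sub_zero]
  have hterm_nonneg : ∀ l ∈ range (m + 1), 0 ≤ (-1 : ℤ) ^ l * (m.choose l : ℤ) * (f l - 1) := by
    intro l hl
    have hlm := Nat.lt_succ_iff.mp (mem_range.mp hl)
    rcases Nat.even_or_odd l with hl_even | hl_odd
    · simp [heven l hlm hl_even]
    · rw [hl_odd.neg_one_pow, neg_one_mul, neg_mul, neg_nonneg]
      exact mul_nonpos_of_nonneg_of_nonpos (by positivity) (sub_nonpos.mpr (hle l hlm))
  intro l hlm
  have hterm := (sum_eq_zero_iff_of_nonneg hterm_nonneg).mp hsum_sub l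
    (mem_range.mpr (Nat.lt_succ_of_le hlm))
  have hcoeff : (-1 : ℤ) ^ l * (m.choose l : ℤ) ≠ 0 :=
    mul_ne_zero (pow_ne_zero _ (by norm_num)) (by exact_mod_cast (Nat.choose_pos hlm).ne')
  exact sub_eq_zero.mp ((mul_eq_zero.mp hterm).resolve_left hcoeff)

theorem odd_terms_equal_one_general (m r : ℕ) (hr : 2 ^ m < r)
    (P : ℤ → ℤ) (ν : ℤ)
    (hcong : (r : ℤ) ∣
      ∑ l ∈ Finset.range (m + 1), (-1 : ℤ) ^ l * (m.choose l : ℤ) * P (ν + l * r))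
    (hbound : ∀ l ≤ m, |P (ν + l * r)| ≤ 1)
    (heven : ∀ l ≤ m, Even l → P (ν + l * r) = 1) :
    ∀ l ≤ m, Odd l → P (ν + l * r) = 1 := by
  intro l hlm hl_odd
  have hm : m ≠ 0 := (hl_odd.pos.trans_le hlm).ne'
  have hsum : ∑ l ∈ range (m + 1), (-1 : ℤ) ^ l * (m.choose l : ℤ) * P (ν + l * r) = 0 :=
    Int.eq_zero_of_abs_lt_dvd hcong
      ((abs_alternating_choose_sum_le hbound).trans_lt (by exact_mod_cast hr))
  exact eq_one_of_alternating_choose_sum_eq_zero (f := fun l : ℕ => P (ν + l * r)) hm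
    (fun l hl => (abs_le.mp (hbound l hl)).2) heven hsum l hlm

theorem odd_terms_equal_one (m r : ℕ) (hm : 1 ≤ m) (hr : 2 ^ m < r)
    (P : ℤ → ℤ) (ν : ℤ)
    (hcong : (r : ℤ) ∣
      ∑ l ∈ Finset.range (m + 1), (-1 : ℤ) ^ l * (m.choose l : ℤ) * P (ν + l * r))
    (hbound : ∀ l ≤ m, |P (ν + l * r)| ≤ 1)
    (heven : ∀ l ≤ m, Even l → P (ν + l * r) = 1) :
    ∀ l ≤ m, Odd l → P (ν + l * r) = 1 :=
  odd_terms_equal_one_general m r hr P ν hcong hbound heven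
end

section
/- Let f : {0,1}^k → {0,1} be symmetric with values f_0,...,f_k on weights 0,...,k. For fixed t with 0 ≤ t ≤ k, all Fourier coefficients f̂(S) with 1 ≤ |S| ≤ t vanish if and only if the t+1 quantities Σ_{i=0}^{k} f_i·C(k−t, i−w), for w = 0, 1, ..., t, are all equal to each other. -/
open Finset

/-- `Nseq k F s w = ∑_{j=0}^{k-s} C(k-s,j) F(w+j)`. -/
noncomputable def Nseq (k : ℕ) (F : ℕ → ℝ) (s w : ℕ) : ℝ :=
  ∑ j ∈ Finset.range (k - s + 1), ((k - s).choose j : ℝ) * F (w + j)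

noncomputable def Lseq (k : ℕ) (F : ℕ → ℝ) (s : ℕ) : ℝ :=
  ∑ i ∈ Finset.range (s + 1), (-1 : ℝ) ^ i * (s.choose i : ℝ) * Nseq k F s i

noncomputable def Gseq (k t : ℕ) (F : ℕ → ℝ) (s w : ℕ) : ℝ :=
  ∑ i ∈ Finset.range (s + 1), (-1 : ℝ) ^ i * (s.choose i : ℝ) * Nseq k F t (w + i)

/-- binomial Pascal step for weighted sums. -/
lemma binom_step (d : ℕ) (h : ℕ → ℝ) :
    ∑ a ∈ Finset.range (d + 2), ((d + 1).choose a : ℝ) * h a =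
      (∑ a ∈ Finset.range (d + 1), (d.choose a : ℝ) * h a) +
        ∑ a ∈ Finset.range (d + 1), (d.choose a : ℝ) * h (a + 1) := by
  rw [Finset.sum_range_succ' (fun a => ((d + 1).choose a : ℝ) * h a)]
  have : ∀ a, (((d + 1).choose (a + 1) : ℕ) : ℝ) = (d.choose a : ℝ) + (d.choose (a + 1) : ℝ) := by
    intro a; rw [Nat.choose_succ_succ]; push_cast; ring
  rw [Finset.sum_congr rfl (fun a _ => by rw [this a])]
  simp only [add_mul]
  rw [Finset.sum_add_distrib]
  have h2 : ∑ a ∈ Finset.range (d + 1), (d.choose (a + 1) : ℝ) * h (a + 1) =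
      ∑ a ∈ Finset.range d, (d.choose (a + 1) : ℝ) * h (a + 1) := by
    rw [Finset.sum_range_succ]; simp
  have h3 : ∑ a ∈ Finset.range (d + 1), (d.choose a : ℝ) * h a =
      (∑ a ∈ Finset.range d, (d.choose (a + 1) : ℝ) * h (a + 1)) + (d.choose 0 : ℝ) * h 0 := by
    rw [Finset.sum_range_succ' (fun a => (d.choose a : ℝ) * h a)]
  rw [h2, h3]; simp; ring

lemma Nseq_pascal {k : ℕ} (F : ℕ → ℝ) {s : ℕ} (hs : s < k) (w : ℕ) :
    Nseq k F s w = Nseq k F (s + 1) w + Nseq k F (s + 1) (w + 1) := by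
  have hk : k - s = (k - (s + 1)) + 1 := by omega
  unfold Nseq
  rw [hk]
  have := binom_step (k - (s + 1)) (fun a => F (w + a))
  rw [this]
  congr 1
  exact Finset.sum_congr rfl fun a _ => by rw [show w + (a + 1) = (w + 1) + a by ring]

lemma Nseq_iter (k : ℕ) (F : ℕ → ℝ) :
    ∀ d s w : ℕ, s + d ≤ k →
      Nseq k F s w = ∑ a ∈ Finset.range (d + 1), (d.choose a : ℝ) * Nseq k F (s + d) (w + a) := by
  intro d
  induction d with
  | zero => intro s w _; simp
  | succ d ih =>
    intro s w h
    rw [Nseq_pascal F (show s < k by omega) w, ih (s + 1) w (by omega), ih (s + 1) (w + 1) (by omega)]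
    have := binom_step d (fun a => Nseq k F (s + (d + 1)) (w + a))
    rw [show s + 1 + d = s + (d + 1) by ring] at *
    rw [this]
    congr 1
    exact Finset.sum_congr rfl fun a _ => by rw [show w + (a + 1) = (w + 1) + a by ring]

lemma Lseq_eq_sum_G {k t : ℕ} (F : ℕ → ℝ) {s : ℕ} (hst : s ≤ t) (htk : t ≤ k) :
    Lseq k F s = ∑ w ∈ Finset.range (t - s + 1), ((t - s).choose w : ℝ) * Gseq k t F s w := by
  unfold Lseq Gseq
  have key : ∀ i, Nseq k F s i =
      ∑ a ∈ Finset.range (t - s + 1), ((t - s).choose a : ℝ) * Nseq k F t (i + a) := by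
    intro i
    have := Nseq_iter k F (t - s) s i (by omega)
    rwa [show s + (t - s) = t by omega] at this
  rw [Finset.sum_congr rfl fun i _ => by rw [key i, Finset.mul_sum]]
  rw [Finset.sum_comm]
  refine Finset.sum_congr rfl fun w _ => ?_
  rw [Finset.mul_sum]
  refine Finset.sum_congr rfl fun i _ => ?_
  rw [show i + w = w + i from add_comm i w]; ring

lemma Gseq_succ {k t : ℕ} (F : ℕ → ℝ) (s w : ℕ) :
    Gseq k t F (s + 1) w = Gseq k t F s w - Gseq k t F s (w + 1) := by
  have hc : ∀ i, (((s + 1).choose (i + 1) : ℕ) : ℝ) = (s.choose i : ℝ) + (s.choose (i + 1) : ℝ) := by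
    intro i; rw [Nat.choose_succ_succ]; push_cast; ring
  have expand : Gseq k t F (s + 1) w =
      (∑ i ∈ Finset.range (s + 1),
        (-1 : ℝ) ^ (i + 1) * ((s + 1).choose (i + 1) : ℝ) * Nseq k F t (w + (i + 1)))
        + Nseq k F t w := by
    unfold Gseq
    rw [Finset.sum_range_succ' (fun i => (-1 : ℝ) ^ i * ((s + 1).choose i : ℝ) * Nseq k F t (w + i))]
    simp
  have e1 : ∑ i ∈ Finset.range (s + 1),
      (-1 : ℝ) ^ (i + 1) * ((s + 1).choose (i + 1) : ℝ) * Nseq k F t (w + (i + 1)) =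
      (- Gseq k t F s (w + 1))
      - ∑ i ∈ Finset.range (s + 1), (-1 : ℝ) ^ i * (s.choose (i + 1) : ℝ) * Nseq k F t (w + 1 + i) := by
    unfold Gseq
    rw [← Finset.sum_neg_distrib, ← Finset.sum_sub_distrib]
    exact Finset.sum_congr rfl fun i _ => by
      rw [hc i, show w + (i + 1) = (w + 1) + i by ring]; ring
  have e2 : ∑ i ∈ Finset.range (s + 1), (-1 : ℝ) ^ i * (s.choose (i + 1) : ℝ) * Nseq k F t (w + 1 + i)
      = ∑ i ∈ Finset.range s, (-1 : ℝ) ^ i * (s.choose (i + 1) : ℝ) * Nseq k F t (w + 1 + i) := by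
    rw [Finset.sum_range_succ]; simp
  have e3 : Gseq k t F s w = (∑ i ∈ Finset.range s,
      (-1 : ℝ) ^ (i + 1) * (s.choose (i + 1) : ℝ) * Nseq k F t (w + (i + 1))) + Nseq k F t w := by
    unfold Gseq
    rw [Finset.sum_range_succ' (fun i => (-1 : ℝ) ^ i * (s.choose i : ℝ) * Nseq k F t (w + i))]
    simp
  have e4 : ∑ i ∈ Finset.range s, (-1 : ℝ) ^ i * (s.choose (i + 1) : ℝ) * Nseq k F t (w + 1 + i)
      = Nseq k F t w - Gseq k t F s w := by
    rw [e3]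
    have : ∀ i ∈ Finset.range s,
        (-1 : ℝ) ^ (i + 1) * (s.choose (i + 1) : ℝ) * Nseq k F t (w + (i + 1))
        = -((-1 : ℝ) ^ i * (s.choose (i + 1) : ℝ) * Nseq k F t (w + 1 + i)) := by
      intro i _; rw [show w + (i + 1) = w + 1 + i by ring]; ring
    rw [Finset.sum_congr rfl this, Finset.sum_neg_distrib]
    ring
  rw [expand, e1, e2, e4]
  ring

lemma Gseq_zero_eq_Lseq {k t : ℕ} (F : ℕ → ℝ) : Gseq k t F t 0 = Lseq k F t := by
  unfold Gseq Lseq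
  exact Finset.sum_congr rfl fun i _ => by rw [zero_add]

lemma alt_sum_choose_real {s : ℕ} (hs : 1 ≤ s) :
    ∑ i ∈ Finset.range (s + 1), (-1 : ℝ) ^ i * (s.choose i : ℝ) = 0 := by
  have := Int.alternating_sum_range_choose_of_ne (n := s) (by omega)
  have h2 : ((∑ m ∈ Finset.range (s + 1), ((-1) ^ m * s.choose m : ℤ) : ℤ) : ℝ) = 0 := by
    rw [this]; norm_num
  rw [Int.cast_sum] at h2
  simpa using h2

lemma sum_choose_real (n : ℕ) :
    ∑ i ∈ Finset.range (n + 1), (n.choose i : ℝ) = 2 ^ n := by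
  have := Nat.sum_range_choose n
  have h2 : ((∑ m ∈ Finset.range (n + 1), n.choose m : ℕ) : ℝ) = (2 ^ n : ℕ) := by rw [this]
  push_cast at h2
  simpa using h2

/-- forward core: if all `Lseq` vanish for `1 ≤ s ≤ t`, then all `Gseq` vanish. -/
lemma Gseq_vanish {k t : ℕ} (F : ℕ → ℝ) (htk : t ≤ k)
    (hL : ∀ s, 1 ≤ s → s ≤ t → Lseq k F s = 0) :
    ∀ d s, 1 ≤ s → s ≤ t → t - s ≤ d → ∀ w ≤ t - s, Gseq k t F s w = 0 := by
  intro d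
  induction d with
  | zero =>
    intro s h1 h2 h3 w hw
    have hst : s = t := by omega
    have hw0 : w = 0 := by omega
    rw [hst, hw0, Gseq_zero_eq_Lseq]
    exact hL t (by omega) le_rfl
  | succ d ih =>
    intro s h1 h2 h3 w hw
    by_cases hd : t - s ≤ d
    · exact ih s h1 h2 hd w hw
    · have heq : t - s = d + 1 := by omega
      have hslt : s < t := by omega
      -- G s is constant on [0, t-s]
      have hconst : ∀ v ≤ t - s, Gseq k t F s v = Gseq k t F s 0 := by
        intro v hv
        induction v with
        | zero => rfl
        | succ v ihv =>
          have hv' : v ≤ t - (s + 1) := by omega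
          have := Gseq_succ (k := k) (t := t) F s v
          have hz : Gseq k t F (s + 1) v = 0 :=
            ih (s + 1) (by omega) (by omega) (by omega) v hv'
          have : Gseq k t F s (v + 1) = Gseq k t F s v := by linarith [this, hz]
          rw [this, ihv (by omega)]
      have hLs := hL s h1 h2
      rw [Lseq_eq_sum_G F h2 htk] at hLs
      have : ∑ w ∈ Finset.range (t - s + 1), ((t - s).choose w : ℝ) * Gseq k t F s w
          = (2 : ℝ) ^ (t - s) * Gseq k t F s 0 := by
        rw [Finset.sum_congr rfl fun v hv => by
          rw [hconst v (by simpa [Nat.lt_succ_iff] using hv)]]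
        rw [← Finset.sum_mul, sum_choose_real]
      rw [this] at hLs
      have h0 : Gseq k t F s 0 = 0 := by
        have h2t : (2 : ℝ) ^ (t - s) ≠ 0 := by positivity
        exact (mul_eq_zero.mp hLs).resolve_left h2t
      rw [hconst w hw, h0]

/-- forward conclusion -/
lemma Nseq_const_of_Lseq {k t : ℕ} (F : ℕ → ℝ) (htk : t ≤ k)
    (hL : ∀ s, 1 ≤ s → s ≤ t → Lseq k F s = 0) :
    ∀ w ≤ t, Nseq k F t w = Nseq k F t 0 := by
  rcases Nat.eq_zero_or_pos t with ht | ht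
  · intro w hw; have hw0 : w = 0 := by omega
    rw [hw0]
  · have hG1 : ∀ w ≤ t - 1, Gseq k t F 1 w = 0 :=
      fun w hw => Gseq_vanish F htk hL (t - 1) 1 le_rfl ht (le_rfl) w hw
    have hstep : ∀ w, w ≤ t - 1 → Nseq k F t (w + 1) = Nseq k F t w := by
      intro w hw
      have := hG1 w hw
      unfold Gseq at this
      simp [Finset.sum_range_succ] at this
      linarith
    intro w hw
    induction w with
    | zero => rfl
    | succ w ihw => rw [hstep w (by omega), ihw (by omega)]

/-- backward -/
lemma Lseq_zero_of_Nseq_const {k t : ℕ} (F : ℕ → ℝ) (htk : t ≤ k)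
    (hN : ∀ w ≤ t, Nseq k F t w = Nseq k F t 0) :
    ∀ s, 1 ≤ s → s ≤ t → Lseq k F s = 0 := by
  intro s h1 h2
  unfold Lseq
  have key : ∀ i ≤ s, Nseq k F s i = 2 ^ (t - s) * Nseq k F t 0 := by
    intro i hi
    have := Nseq_iter k F (t - s) s i (by omega)
    rw [show s + (t - s) = t by omega] at this
    rw [this, Finset.sum_congr rfl fun a ha => by
      rw [hN (i + a) (by
        have := Finset.mem_range.mp ha
        omega)]]
    rw [← Finset.sum_mul, sum_choose_real]
  rw [Finset.sum_congr rfl fun i hi => by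
    rw [key i (by simpa [Nat.lt_succ_iff] using hi)]]
  have : ∑ i ∈ Finset.range (s + 1),
      (-1 : ℝ) ^ i * (s.choose i : ℝ) * (2 ^ (t - s) * Nseq k F t 0)
      = (∑ i ∈ Finset.range (s + 1), (-1 : ℝ) ^ i * (s.choose i : ℝ))
        * (2 ^ (t - s) * Nseq k F t 0) := by
    rw [Finset.sum_mul]
  rw [this, alt_sum_choose_real h1, zero_mul]

lemma sum_fun_bool {α : Type*} [Fintype α] [DecidableEq α] (H : ℕ → ℝ) :
    ∑ y : α → Bool, H (∑ a : α, if y a then 1 else 0) =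
      ∑ j ∈ Finset.range (Fintype.card α + 1), ((Fintype.card α).choose j : ℝ) * H j := by
  have h1 : ∀ y : α → Bool, (∑ a : α, if y a then 1 else 0 : ℕ) =
      (Finset.univ.filter fun a => y a = true).card := by
    intro y
    rw [Finset.card_filter]
  rw [Finset.sum_congr rfl fun y _ => by rw [h1 y]]
  have h2 : ∑ y : α → Bool, H (Finset.univ.filter fun a => y a = true).card =
      ∑ A ∈ (Finset.univ : Finset α).powerset, H A.card := by
    apply Finset.sum_nbij' (i := fun y => Finset.univ.filter fun a => y a = true)
      (j := fun A => fun a => decide (a ∈ A))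
    · intro y _; simp
    · intro A _; simp
    · intro y _; funext a; simp
    · intro A _; ext a; simp
    · intro y _; rfl
  rw [h2, Finset.sum_powerset_apply_card]
  simp [Finset.card_univ, nsmul_eq_mul]

lemma fourier_eq (k : ℕ) (g : ℕ → Bool) (f : (Fin k → Bool) → Bool)
    (hsymm : ∀ x : Fin k → Bool, f x = g (univ.filter fun i => x i = true).card)
    (S : Finset (Fin k)) :
    boolFourierCoeff k f S =
      (1 / 2 ^ k : ℝ) * Lseq k (fun i => if g i then (1 : ℝ) else 0) S.card := by
  set F : ℕ → ℝ := fun i => if g i then (1 : ℝ) else 0 with hF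
  unfold boolFourierCoeff
  congr 1
  set s := S.card with hs
  have hcard : Fintype.card {i : Fin k // i ∈ S} = s := by
    simp [Fintype.card_coe, hs]
  have hcardc : Fintype.card {i : Fin k // ¬ i ∈ S} = k - s := by
    rw [Fintype.card_subtype_compl, hcard]
    simp
  -- rewrite summand using symmetry
  have step0 : ∀ x : Fin k → Bool,
      (if f x then (1 : ℝ) else 0) * (-1 : ℝ) ^ (∑ i ∈ S, if x i then 1 else 0) =
      F (∑ i : Fin k, if x i then 1 else 0) *
        (-1 : ℝ) ^ (∑ i ∈ S, if x i then 1 else 0) := by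
    intro x
    rw [hsymm x, Finset.card_filter]
  rw [Finset.sum_congr rfl fun x _ => step0 x]
  -- change variables via the splitting equivalence
  set e := (Equiv.piEquivPiSubtypeProd (fun i : Fin k => i ∈ S) fun _ => Bool) with he
  rw [← Equiv.sum_comp e.symm
    (fun x => F (∑ i : Fin k, if x i then 1 else 0) *
      (-1 : ℝ) ^ (∑ i ∈ S, if x i then 1 else 0))]
  rw [Fintype.sum_prod_type]
  have hval : ∀ (y : {i : Fin k // i ∈ S} → Bool) (z : {i : Fin k // ¬ i ∈ S} → Bool),
      (∑ i ∈ S, if (e.symm (y, z)) i then 1 else 0 : ℕ) =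
        (∑ a : {i : Fin k // i ∈ S}, if y a then 1 else 0 : ℕ) := by
    intro y z
    rw [Finset.sum_subtype S (fun i => Iff.rfl) (fun i => if (e.symm (y, z)) i then 1 else 0)]
    refine Finset.sum_congr rfl fun a _ => ?_
    congr 1
    simp [he, Equiv.piEquivPiSubtypeProd, a.2]
  have hvalU : ∀ (y : {i : Fin k // i ∈ S} → Bool) (z : {i : Fin k // ¬ i ∈ S} → Bool),
      (∑ i : Fin k, if (e.symm (y, z)) i then 1 else 0 : ℕ) =
        (∑ a : {i : Fin k // i ∈ S}, if y a then 1 else 0 : ℕ) +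
        (∑ b : {i : Fin k // ¬ i ∈ S}, if z b then 1 else 0 : ℕ) := by
    intro y z
    rw [← Finset.sum_add_sum_compl S (fun i => if (e.symm (y, z)) i then 1 else 0)]
    congr 1
    · exact hval y z
    · rw [Finset.sum_subtype (p := fun i => ¬ i ∈ S) Sᶜ (fun i => by simp) (fun i => if (e.symm (y, z)) i then 1 else 0)]
      refine Finset.sum_congr rfl fun b _ => ?_
      congr 1
      simp [he, Equiv.piEquivPiSubtypeProd, b.2]
  calc ∑ y : {i : Fin k // i ∈ S} → Bool, ∑ z : {i : Fin k // ¬ i ∈ S} → Bool,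
        F (∑ i : Fin k, if (e.symm (y, z)) i then 1 else 0) *
          (-1 : ℝ) ^ (∑ i ∈ S, if (e.symm (y, z)) i then 1 else 0)
      = ∑ y : {i : Fin k // i ∈ S} → Bool, ∑ z : {i : Fin k // ¬ i ∈ S} → Bool,
          F ((∑ a : {i : Fin k // i ∈ S}, if y a then 1 else 0) +
             (∑ b : {i : Fin k // ¬ i ∈ S}, if z b then 1 else 0)) *
          (-1 : ℝ) ^ (∑ a : {i : Fin k // i ∈ S}, if y a then 1 else 0) := by
        refine Finset.sum_congr rfl fun y _ => Finset.sum_congr rfl fun z _ => ?_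
        rw [hval y z, hvalU y z]
    _ = ∑ y : {i : Fin k // i ∈ S} → Bool,
          (-1 : ℝ) ^ (∑ a : {i : Fin k // i ∈ S}, if y a then 1 else 0) *
          Nseq k F s (∑ a : {i : Fin k // i ∈ S}, if y a then 1 else 0) := by
        refine Finset.sum_congr rfl fun y _ => ?_
        set W := (∑ a : {i : Fin k // i ∈ S}, if y a then 1 else 0 : ℕ) with hW
        rw [sum_fun_bool (fun j => F (W + j) * (-1 : ℝ) ^ W), hcardc]
        unfold Nseq
        rw [Finset.mul_sum]
        exact Finset.sum_congr rfl fun j _ => by ring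
    _ = Lseq k F s := by
        rw [sum_fun_bool (fun i => (-1 : ℝ) ^ i * Nseq k F s i), hcard]
        unfold Lseq
        exact Finset.sum_congr rfl fun i _ => by ring

lemma stmt_sum_eq_Nseq (k t : ℕ) (htk : t ≤ k) (F : ℕ → ℝ) {w : ℕ} (hw : w ≤ t) :
    (∑ i ∈ Finset.range (k + 1),
        F i * (if w ≤ i then ((k - t).choose (i - w) : ℝ) else 0)) = Nseq k F t w := by
  have hsub : Finset.Ico w (w + (k - t) + 1) ⊆ Finset.range (k + 1) := by
    intro i hi
    simp only [Finset.mem_Ico] at hi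
    simp only [Finset.mem_range]
    omega
  rw [← Finset.sum_subset hsub (fun i hi hni => ?_)]
  · rw [Finset.sum_Ico_eq_sum_range]
    rw [show w + (k - t) + 1 - w = k - t + 1 by omega]
    unfold Nseq
    refine Finset.sum_congr rfl fun j _ => ?_
    rw [if_pos (Nat.le_add_right w j), show w + j - w = j by omega]
    ring
  · simp only [Finset.mem_Ico, not_and, not_lt] at hni
    simp only [Finset.mem_range] at hi
    by_cases hwi : w ≤ i
    · rw [if_pos hwi, Nat.choose_eq_zero_of_lt (by omega)]
      simp
    · rw [if_neg hwi, mul_zero]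

theorem symmetric_fourier_vanish_iff (k t : ℕ) (htk : t ≤ k) (g : ℕ → Bool)
    (f : (Fin k → Bool) → Bool)
    (hsymm : ∀ x : Fin k → Bool, f x = g (univ.filter fun i => x i = true).card) :
    (∀ S : Finset (Fin k), 1 ≤ S.card → S.card ≤ t → boolFourierCoeff k f S = 0) ↔
      ∀ w ≤ t, ∀ w' ≤ t,
        (∑ i ∈ Finset.range (k + 1),
            (if g i then (1 : ℝ) else 0) *
              (if w ≤ i then ((k - t).choose (i - w) : ℝ) else 0)) =
          ∑ i ∈ Finset.range (k + 1),
            (if g i then (1 : ℝ) else 0) *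
              (if w' ≤ i then ((k - t).choose (i - w') : ℝ) else 0) := by
  set F : ℕ → ℝ := fun i => if g i then (1 : ℝ) else 0 with hF
  have h2k : (1 / 2 ^ k : ℝ) ≠ 0 := by positivity
  constructor
  · intro h w hw w' hw'
    have hL : ∀ s, 1 ≤ s → s ≤ t → Lseq k F s = 0 := by
      intro s h1 h2
      obtain ⟨S, -, hScard⟩ := Finset.exists_subset_card_eq
        (s := (Finset.univ : Finset (Fin k))) (n := s) (by simp; omega)
      have hz := h S (by omega) (by omega)
      rw [fourier_eq k g f hsymm S, hScard] at hz
      exact (mul_eq_zero.mp hz).resolve_left h2k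
    rw [stmt_sum_eq_Nseq k t htk F hw, stmt_sum_eq_Nseq k t htk F hw',
      Nseq_const_of_Lseq F htk hL w hw, Nseq_const_of_Lseq F htk hL w' hw']
  · intro h S h1 h2
    have hN : ∀ w ≤ t, Nseq k F t w = Nseq k F t 0 := by
      intro w hw
      have := h w hw 0 (Nat.zero_le t)
      rwa [stmt_sum_eq_Nseq k t htk F hw, stmt_sum_eq_Nseq k t htk F (Nat.zero_le t)] at this
    rw [fourier_eq k g f hsymm S, Lseq_zero_of_Nseq_const F htk hN S.card h1 h2, mul_zero]
end
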